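/- arXiv:1804.08943 — 2 statements merged into one kernel-verified Lean document; each statement's English description precedes it below -/
import Mathlib

section
/- The function (a,b) ↦ |b|^{γ'} / a^{(γ'-1)(1-α)} is convex on ℝ₊₊ × ℝ^d whenever 0 ≤ α < 1 < γ and γ' = γ/(γ-1). -/
/-!
With `p = γ'` and `s = 1 - α`, the function is `(a, b) ↦ g (a ^ s, ‖b‖)` where
`g (A, X) = X ^ p / A ^ (p - 1) = A * (X / A) ^ p` is the perspective of the convex function
`X ↦ X ^ p`, hence jointly convex. Since `g` is nonincreasing in `A` and nondecreasing in `X`,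
composing it with the concave `a ↦ a ^ s` and the convex `b ↦ ‖b‖` preserves convexity.
-/

open Real Set

theorem inv_smul_add_eq_weighted_inv_smul {E : Type*} [AddCommGroup E] [Module ℝ E]
    {a a' : ℝ} (ha : a ≠ 0) (ha' : a' ≠ 0) (t u : ℝ) (x x' : E) :
    (t * a + u * a')⁻¹ • (t • x + u • x') =
      (t * a / (t * a + u * a')) • (a⁻¹ • x) + (u * a' / (t * a + u * a')) • (a'⁻¹ • x') := by
  simp only [smul_add, smul_smul]
  congr 2 <;> field_simp

theorem ConvexOn.perspective {E : Type*} [AddCommGroup E] [Module ℝ E] {s : Set E} {f : E → ℝ}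
    (hf : ConvexOn ℝ s f) :
    ConvexOn ℝ {x : ℝ × E | 0 < x.1 ∧ x.1⁻¹ • x.2 ∈ s} (fun x => x.1 * f (x.1⁻¹ • x.2)) := by
  refine ⟨?_, ?_⟩
  · rintro ⟨a, x⟩ ⟨ha, hx⟩ ⟨a', x'⟩ ⟨ha', hx'⟩ t u ht hu htu
    have hM : 0 < t * a + u * a' := convex_Ioi (0 : ℝ) ha ha' ht hu htu
    refine ⟨hM, ?_⟩
    simp only [Prod.smul_mk, Prod.mk_add_mk, smul_eq_mul,
      inv_smul_add_eq_weighted_inv_smul ha.ne' ha'.ne']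
    exact hf.1 hx hx' (by positivity) (by positivity) (by field_simp)
  · rintro ⟨a, x⟩ ⟨ha, hx⟩ ⟨a', x'⟩ ⟨ha', hx'⟩ t u ht hu htu
    have hM : 0 < t * a + u * a' := convex_Ioi (0 : ℝ) ha ha' ht hu htu
    simp only [Prod.smul_mk, Prod.mk_add_mk, smul_eq_mul,
      inv_smul_add_eq_weighted_inv_smul ha.ne' ha'.ne']
    calc (t * a + u * a') * f ((t * a / (t * a + u * a')) • (a⁻¹ • x) +
            (u * a' / (t * a + u * a')) • (a'⁻¹ • x'))
        ≤ (t * a + u * a') * ((t * a / (t * a + u * a')) * f (a⁻¹ • x) +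
            (u * a' / (t * a + u * a')) * f (a'⁻¹ • x')) :=
          mul_le_mul_of_nonneg_left
            (hf.2 hx hx' (by positivity) (by positivity) (by field_simp)) hM.le
      _ = t * (a * f (a⁻¹ • x)) + u * (a' * f (a'⁻¹ • x')) := by
          field_simp

theorem convexOn_rpow_div_rpow_sub_one {p : ℝ} (hp : 1 ≤ p) :
    ConvexOn ℝ (Ioi 0 ×ˢ Ici 0) (fun x : ℝ × ℝ => x.2 ^ p / x.1 ^ (p - 1)) := by
  have hdom : {x : ℝ × ℝ | 0 < x.1 ∧ x.1⁻¹ • x.2 ∈ Ici 0} = Ioi 0 ×ˢ Ici 0 := by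
    ext ⟨a, x⟩
    simp only [mem_ofPred_eq, mem_prod, mem_Ioi, mem_Ici, smul_eq_mul]
    exact and_congr_right fun ha => by rw [mul_nonneg_iff_of_pos_left (inv_pos.2 ha)]
  refine hdom ▸ (convexOn_rpow hp).perspective.congr ?_
  rintro ⟨a, x⟩ ⟨ha, hx⟩
  simp only [smul_eq_mul] at hx ⊢
  rw [mul_rpow (inv_nonneg.2 ha.le) (mul_nonneg_iff_of_pos_left (inv_pos.2 ha) |>.1 hx),
    inv_rpow ha.le, rpow_sub_one ha.ne']
  field_simp

theorem convexOn_norm_rpow_div_rpow {E : Type*} [NormedAddCommGroup E] [NormedSpace ℝ E]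
    {p s : ℝ} (hp : 1 ≤ p) (hs₀ : 0 ≤ s) (hs₁ : s ≤ 1) :
    ConvexOn ℝ {x : ℝ × E | 0 < x.1} (fun x => ‖x.2‖ ^ p / x.1 ^ ((p - 1) * s)) := by
  refine ⟨(convex_Ioi 0).linear_preimage (LinearMap.fst ℝ ℝ E), ?_⟩
  rintro ⟨a, b⟩ (ha : 0 < a) ⟨a', b'⟩ (ha' : 0 < a') t u ht hu htu
  have hpow : ∀ c : ℝ, 0 ≤ c → c ^ ((p - 1) * s) = (c ^ s) ^ (p - 1) := fun c hc => by
    rw [mul_comm, rpow_mul hc]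
  have hnorm : ‖t • b + u • b'‖ ≤ t * ‖b‖ + u * ‖b'‖ :=
    (convexOn_norm convex_univ).2 (mem_univ b) (mem_univ b') ht hu htu
  have hconc : t * a ^ s + u * a' ^ s ≤ (t * a + u * a') ^ s :=
    (concaveOn_rpow hs₀ hs₁).2 ha.le ha'.le ht hu htu
  have hg := (convexOn_rpow_div_rpow_sub_one hp).2
    (x := (a ^ s, ‖b‖)) (y := (a' ^ s, ‖b'‖)) ⟨rpow_pos_of_pos ha s, norm_nonneg b⟩
    ⟨rpow_pos_of_pos ha' s, norm_nonneg b'⟩ ht hu htu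
  simp only [Prod.smul_mk, Prod.mk_add_mk, smul_eq_mul] at hg ⊢
  have hA : 0 < t * a ^ s + u * a' ^ s :=
    convex_Ioi (0 : ℝ) (rpow_pos_of_pos ha s) (rpow_pos_of_pos ha' s) ht hu htu
  calc ‖t • b + u • b'‖ ^ p / (t * a + u * a') ^ ((p - 1) * s)
      ≤ (t * ‖b‖ + u * ‖b'‖) ^ p / (t * a ^ s + u * a' ^ s) ^ (p - 1) := by
        rw [hpow _ (by positivity)]
        exact div_le_div₀ (by positivity) (rpow_le_rpow (norm_nonneg _) hnorm (by linarith))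
          (rpow_pos_of_pos hA _) (rpow_le_rpow hA.le hconc (by linarith))
    _ ≤ t * (‖b‖ ^ p / (a ^ s) ^ (p - 1)) + u * (‖b'‖ ^ p / (a' ^ s) ^ (p - 1)) := hg
    _ = t * (‖b‖ ^ p / a ^ ((p - 1) * s)) + u * (‖b'‖ ^ p / a' ^ ((p - 1) * s)) := by
        rw [hpow a ha.le, hpow a' ha'.le]

/-- The function `(a,b) ↦ ‖b‖^γ' / a^((γ'-1)(1-α))` is convex on `ℝ₊₊ × ℝ^d`
whenever `0 ≤ α < 1 < γ` and `γ' = γ/(γ-1)`. -/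
theorem convexOn_congestion_kinetic (d : ℕ) (α γ γ' : ℝ)
    (hα0 : 0 ≤ α) (hα1 : α < 1) (hγ : 1 < γ) (hγ' : γ' = γ / (γ - 1)) :
    ConvexOn ℝ {x : ℝ × EuclideanSpace ℝ (Fin d) | 0 < x.1}
      (fun x : ℝ × EuclideanSpace ℝ (Fin d) =>
        ‖x.2‖ ^ γ' / x.1 ^ ((γ' - 1) * (1 - α))) := by
  have hγ'₁ : 1 < γ' := by
    rw [hγ', one_lt_div (by linarith)]
    linarith
  exact convexOn_norm_rpow_div_rpow hγ'₁.le (by linarith) (by linarith)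
end

section
/- The solution space of the linear ODE system μ' + a μ + a v = 0, −v' + a v − b μ = 0 among 1-periodic C¹ functions, where a = 4π² T̄, b = T̄ f'(1), T̄ = (−4π² − f'(1))^{−1/2}, and −8π² < f'(1) < −4π², is a two-dimensional real vector space spanned by (cos(2πt), (√(−4π²−f'(1))/(2π)) sin(2πt) − cos(2πt)) and (sin(2πt), −(√(−4π²−f'(1))/(2π)) cos(2πt) − sin(2πt)). -/
/-!
The system reads `w' = L w` with `L = [[-a, -a], [-b, a]]`. Since `tr L = 0` and
`det L = -a (a + b) = a √(-4π² - c) = 4π²`, the eigenvalues of `L` are `±2πi`: if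
`L p = 2π q` and `L q = -2π p`, then `cos (2πt) p + sin (2πt) q` is a 1-periodic solution.
Uniqueness for linear ODEs then identifies every solution with the one through the same
initial value, and `f₁ 0 = (1, -1)`, `f₂ 0 = (0, -√(-4π² - c) / 2π)` form a basis of `ℝ²`.
-/

open Real

section LinearODE

variable {E : Type*} [NormedAddCommGroup E] [NormedSpace ℝ E]

theorem hasDerivAt_cos_smul_add_sin_smul {L : E →L[ℝ] E} {ω : ℝ} {p q : E}
    (hp : L p = ω • q) (hq : L q = -ω • p) (t : ℝ) :
    HasDerivAt (fun t => cos (ω * t) • p + sin (ω * t) • q)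
      (L (cos (ω * t) • p + sin (ω * t) • q)) t := by
  have hω : HasDerivAt (fun t => ω * t) ω t := by simpa using (hasDerivAt_id t).const_mul ω
  refine ((((hasDerivAt_cos _).comp t hω).smul_const p).add
    (((hasDerivAt_sin _).comp t hω).smul_const q)).congr_deriv ?_
  rw [map_add, map_smul, map_smul, hp, hq]
  module

theorem periodic_cos_smul_add_sin_smul (ω : ℝ) (p q : E) :
    Function.Periodic (fun t => cos (ω * t) • p + sin (ω * t) • q) (ω⁻¹ * (2 * π)) :=
  ((cos_periodic.const_mul ω).comp (· • p)).add ((sin_periodic.const_mul ω).comp (· • q))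

theorem setOf_periodic_solutions_eq_span {L : E →L[ℝ] E} {T : ℝ} {f₁ f₂ : ℝ → E}
    (hf₁ : ∀ t, HasDerivAt f₁ (L (f₁ t)) t) (hf₂ : ∀ t, HasDerivAt f₂ (L (f₂ t)) t)
    (hT₁ : Function.Periodic f₁ T) (hT₂ : Function.Periodic f₂ T)
    (hspan : Submodule.span ℝ {f₁ 0, f₂ 0} = ⊤) :
    {w : ℝ → E | Function.Periodic w T ∧ ∀ t, HasDerivAt w (L (w t)) t} =
      Submodule.span ℝ {f₁, f₂} := by
  have hsol (x y : ℝ) (t : ℝ) : HasDerivAt (x • f₁ + y • f₂) (L ((x • f₁ + y • f₂) t)) t := by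
    simpa using ((hf₁ t).const_smul x).add ((hf₂ t).const_smul y)
  ext w
  simp only [Set.mem_ofPred_eq, SetLike.mem_coe, Submodule.mem_span_pair]
  constructor
  · rintro ⟨-, hw⟩
    obtain ⟨x, y, hxy⟩ := Submodule.mem_span_pair.1 (hspan ▸ Submodule.mem_top (x := w 0))
    exact ⟨x, y, ODE_solution_unique_univ (fun _ => L.lipschitz.lipschitzOnWith (s := Set.univ))
      (fun t => ⟨hsol x y t, trivial⟩) (fun t => ⟨hw t, trivial⟩) (t₀ := 0) (by simpa using hxy)⟩
  · rintro ⟨x, y, rfl⟩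
    exact ⟨(hT₁.smul x).add (hT₂.smul y), hsol x y⟩

theorem periodic_solutions_eq_span_of_rotation [FiniteDimensional ℝ E]
    (hE : Module.finrank ℝ E = 2) {L : E →L[ℝ] E} {ω T : ℝ} (hωT : ω * T = 2 * π) {p q : E}
    (hp : L p = ω • q) (hq : L q = -ω • p) (hpq : LinearIndependent ℝ ![p, q])
    {f₁ f₂ : ℝ → E} (hf₁ : f₁ = fun t => cos (ω * t) • p + sin (ω * t) • q)
    (hf₂ : f₂ = fun t => cos (ω * t) • -q + sin (ω * t) • p) :
    {w : ℝ → E | Function.Periodic w T ∧ ∀ t, HasDerivAt w (L (w t)) t} =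
      Submodule.span ℝ {f₁, f₂} ∧ LinearIndependent ℝ ![f₁, f₂] := by
  have hT : ω⁻¹ * (2 * π) = T := by
    rw [← hωT, inv_mul_cancel_left₀]
    rintro rfl
    simp [pi_ne_zero] at hωT
  have hind : LinearIndependent ℝ ![f₁ 0, f₂ 0] := by
    rw [LinearIndependent.pair_iff] at hpq ⊢
    intro x y hxy
    simpa using hpq x (-y) (by simpa [hf₁, hf₂] using hxy)
  have hspan : Submodule.span ℝ {f₁ 0, f₂ 0} = ⊤ := by
    simpa [Matrix.range_cons, Set.range_unique, Set.pair_comm]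
      using hind.span_eq_top_of_card_eq_finrank' (by simp [hE])
  refine ⟨setOf_periodic_solutions_eq_span
    (hf₁ ▸ hasDerivAt_cos_smul_add_sin_smul hp hq)
    (hf₂ ▸ hasDerivAt_cos_smul_add_sin_smul (by rw [map_neg, hq]; module) (by rw [hp]; module))
    (hf₁ ▸ hT ▸ periodic_cos_smul_add_sin_smul _ _ _)
    (hf₂ ▸ hT ▸ periodic_cos_smul_add_sin_smul _ _ _) hspan, ?_⟩
  refine LinearIndependent.of_comp (LinearMap.proj 0) ?_
  convert hind using 1
  funext i
  fin_cases i <;> rfl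

end LinearODE

noncomputable def linearizedOp (a b : ℝ) : ℝ × ℝ →L[ℝ] ℝ × ℝ :=
  (-a • ContinuousLinearMap.fst ℝ ℝ ℝ - a • ContinuousLinearMap.snd ℝ ℝ ℝ).prod
    (a • ContinuousLinearMap.snd ℝ ℝ ℝ - b • ContinuousLinearMap.fst ℝ ℝ ℝ)

@[simp]
theorem linearizedOp_apply (a b : ℝ) (p : ℝ × ℝ) :
    linearizedOp a b p = (-a * p.1 - a * p.2, a * p.2 - b * p.1) := by
  simp [linearizedOp]

theorem linearized_system_iff_hasDerivAt (a b : ℝ) (w : ℝ → ℝ × ℝ) :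
    (ContDiff ℝ 1 (fun t => (w t).1) ∧ ContDiff ℝ 1 (fun t => (w t).2) ∧
      (∀ t, deriv (fun s => (w s).1) t + a * (w t).1 + a * (w t).2 = 0) ∧
      (∀ t, -deriv (fun s => (w s).2) t + a * (w t).2 - b * (w t).1 = 0)) ↔
    ∀ t, HasDerivAt w (linearizedOp a b (w t)) t := by
  constructor
  · rintro ⟨h₁, h₂, e₁, e₂⟩ t
    have hd := ((h₁.differentiable one_ne_zero t).hasDerivAt).prodMk
      (h₂.differentiable one_ne_zero t).hasDerivAt
    convert hd using 1
    rw [linearizedOp_apply]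
    ext <;> linarith [e₁ t, e₂ t]
  · intro hw
    have hd₁ (t : ℝ) : HasDerivAt (fun s => (w s).1) (linearizedOp a b (w t)).1 t :=
      (ContinuousLinearMap.fst ℝ ℝ ℝ).hasFDerivAt.comp_hasDerivAt t (hw t)
    have hd₂ (t : ℝ) : HasDerivAt (fun s => (w s).2) (linearizedOp a b (w t)).2 t :=
      (ContinuousLinearMap.snd ℝ ℝ ℝ).hasFDerivAt.comp_hasDerivAt t (hw t)
    have hderiv : deriv w = linearizedOp a b ∘ w := funext fun t => (hw t).deriv
    have hc : ContDiff ℝ 1 w := contDiff_one_iff_deriv.2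
      ⟨fun t => (hw t).differentiableAt, hderiv ▸ (linearizedOp a b).continuous.comp
          (continuous_iff_continuousAt.2 fun t => (hw t).continuousAt)⟩
    refine ⟨contDiff_fst.comp hc, contDiff_snd.comp hc, fun t => ?_, fun t => ?_⟩
    · rw [(hd₁ t).deriv, linearizedOp_apply]; ring
    · rw [(hd₂ t).deriv, linearizedOp_apply]; ring

theorem linearized_kernel_description_general (c : ℝ)
    (hc2 : c < -4 * π ^ 2)
    (Tbar a b : ℝ)
    (hT : Tbar = 1 / Real.sqrt (-4 * π ^ 2 - c))
    (ha : a = Tbar * (4 * π ^ 2)) (hb : b = Tbar * c)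
    (f₁ f₂ : ℝ → ℝ × ℝ)
    (hf₁ : f₁ = fun t => (Real.cos (2 * π * t),
      Real.sqrt (-4 * π ^ 2 - c) / (2 * π) * Real.sin (2 * π * t) - Real.cos (2 * π * t)))
    (hf₂ : f₂ = fun t => (Real.sin (2 * π * t),
      -(Real.sqrt (-4 * π ^ 2 - c) / (2 * π)) * Real.cos (2 * π * t) - Real.sin (2 * π * t))) :
    {w : ℝ → ℝ × ℝ |
        ContDiff ℝ 1 (fun t => (w t).1) ∧ ContDiff ℝ 1 (fun t => (w t).2) ∧
        (∀ t, w (t + 1) = w t) ∧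
        (∀ t, deriv (fun s => (w s).1) t + a * (w t).1 + a * (w t).2 = 0) ∧
        (∀ t, -deriv (fun s => (w s).2) t + a * (w t).2 - b * (w t).1 = 0)} =
      (Submodule.span ℝ {f₁, f₂} : Submodule ℝ (ℝ → ℝ × ℝ)) ∧
    LinearIndependent ℝ ![f₁, f₂] := by
  set s := √(-4 * π ^ 2 - c)
  have hs : 0 < s := sqrt_pos.2 (by linarith)
  have hs2 : s ^ 2 = -4 * π ^ 2 - c := sq_sqrt (by linarith)
  set r := s / (2 * π)
  have hp : linearizedOp a b (1, -1) = (2 * π) • (0, r) := by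
    subst ha hb hT; ext <;> simp [r]; field_simp; linarith
  have hq : linearizedOp a b (0, r) = -(2 * π) • (1, -1) := by
    subst ha hb hT; ext <;> simp [r] <;> field_simp <;> ring
  have hpq : LinearIndependent ℝ ![((1 : ℝ), (-1 : ℝ)), (0, r)] := by
    rw [LinearIndependent.pair_iff]
    intro x y hxy
    obtain ⟨rfl, hy⟩ : x = 0 ∧ -x + y * r = 0 := by simpa using hxy
    simpa [r, hs.ne'] using hy
  have hf₁' : f₁ = fun t => cos (2 * π * t) • ((1 : ℝ), (-1 : ℝ)) + sin (2 * π * t) • (0, r) := by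
    subst hf₁; ext t <;> simp [r]; ring
  have hf₂' : f₂ = fun t => cos (2 * π * t) • -(0, r) + sin (2 * π * t) • ((1 : ℝ), (-1 : ℝ)) := by
    subst hf₂; ext t <;> simp [r]; ring
  obtain ⟨hspan, hind⟩ :=
    periodic_solutions_eq_span_of_rotation (by simp) (mul_one _) hp hq hpq hf₁' hf₂'
  refine ⟨Eq.trans (Set.ext fun w => ?_) hspan, hind⟩
  rw [Set.mem_ofPred_eq, Set.mem_ofPred_eq, ← linearized_system_iff_hasDerivAt]
  tauto

/-- The 1-periodic `C¹` solutions of the linearized system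
`μ' + T̄λ₁ μ + T̄λ₁ v = 0`, `−v' + T̄λ₁ v − T̄ c μ = 0` (with `λ₁ = 4π²`,
`T̄ = (−4π² − c)^{−1/2}`, `−8π² < c < −4π²`) form a two-dimensional real vector space
spanned by the two explicit trigonometric solutions. -/
theorem linearized_kernel_description (c : ℝ)
    (hc1 : -8 * π ^ 2 < c) (hc2 : c < -4 * π ^ 2)
    (Tbar a b : ℝ)
    (hT : Tbar = 1 / Real.sqrt (-4 * π ^ 2 - c))
    (ha : a = Tbar * (4 * π ^ 2)) (hb : b = Tbar * c)
    (f₁ f₂ : ℝ → ℝ × ℝ)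
    (hf₁ : f₁ = fun t => (Real.cos (2 * π * t),
      Real.sqrt (-4 * π ^ 2 - c) / (2 * π) * Real.sin (2 * π * t) - Real.cos (2 * π * t)))
    (hf₂ : f₂ = fun t => (Real.sin (2 * π * t),
      -(Real.sqrt (-4 * π ^ 2 - c) / (2 * π)) * Real.cos (2 * π * t) - Real.sin (2 * π * t))) :
    {w : ℝ → ℝ × ℝ |
        ContDiff ℝ 1 (fun t => (w t).1) ∧ ContDiff ℝ 1 (fun t => (w t).2) ∧
        (∀ t, w (t + 1) = w t) ∧
        (∀ t, deriv (fun s => (w s).1) t + a * (w t).1 + a * (w t).2 = 0) ∧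
        (∀ t, -deriv (fun s => (w s).2) t + a * (w t).2 - b * (w t).1 = 0)} =
      (Submodule.span ℝ {f₁, f₂} : Submodule ℝ (ℝ → ℝ × ℝ)) ∧
    LinearIndependent ℝ ![f₁, f₂] :=
  linearized_kernel_description_general c hc2 Tbar a b hT ha hb f₁ f₂ hf₁ hf₂
end
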